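/- Let f₁, f₂, f₃ : ℝ² → ℝ, δ > 0, t₁ ∈ ℝ, k ∈ ℝ², E ∈ ℂ, and Φ = (Φ^A, Φ^B) : ℝ² → ℂ². Let w₁ = (0,0), w₂ = (√3, 0), w₃ = (√3/2, 3/2). Suppose that for every (m,n) ∈ ℤ², setting X = δ𝒞_{m,n}, the two relations Σ_{ν=1}^{3} e^{i k·w_ν} (1 + δ t₁ f_ν(X)) Φ^B(X + δ w_ν) = E Φ^A(X) and Σ_{ν=1}^{3} e^{−i k·w_ν} (1 + δ t₁ f_ν(X − δ w_ν)) Φ^A(X − δ w_ν) = E Φ^B(X) hold. Define ψ_{m,n} = e^{i k·𝒞_{m,n}} Φ(δ𝒞_{m,n}) ∈ ℂ². Then (H^δ ψ)_{m,n} = E ψ_{m,n} for every (m,n) ∈ ℤ²; i.e., any solution of the two-scale continuum system evaluated on the lattice yields a solution of the discrete eigenvalue problem. -/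

import Mathlib

noncomputable section

open Complex Real

/-- Cell points `𝒞_{m,n} = m v₁ + n v₂ = ((√3/2)m, −(3/2)m + 3n)` for the lattice vectors
`v₁ = (√3/2, −3/2)`, `v₂ = (0, 3)`. -/
def cellpt (m n : ℤ) : ℝ × ℝ := ((Real.sqrt 3 / 2) * (m : ℝ), -(3 / 2) * (m : ℝ) + 3 * (n : ℝ))

/-- Index offsets `(m₁,m₂,m₃) = (0,2,1)`. -/
def moff : Fin 3 → ℤ := ![0, 2, 1]

/-- Index offsets `(n₁,n₂,n₃) = (0,1,1)`. -/
def noff : Fin 3 → ℤ := ![0, 1, 1]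

/-- The vectors `w₁ = (0,0)`, `w₂ = (√3, 0)`, `w₃ = (√3/2, 3/2)` (so `w_ν = m_ν v₁ + n_ν v₂`). -/
def ww : Fin 3 → ℝ × ℝ := ![(0, 0), (Real.sqrt 3, 0), (Real.sqrt 3 / 2, 3 / 2)]

/-- The deformed tight-binding Hamiltonian `H^δ`:
`(H^δψ)^A_{m,n} = Σ_ν (1 + δ t₁ f_ν(δ𝒞_{m,n})) ψ^B_{m+m_ν, n+n_ν}` and
`(H^δψ)^B_{m,n} = Σ_ν (1 + δ t₁ f_ν(δ𝒞_{m−m_ν,n−n_ν})) ψ^A_{m−m_ν, n−n_ν}`. -/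
def Hdelta (f : Fin 3 → ℝ × ℝ → ℝ) (δ t1 : ℝ) (ψ : ℤ × ℤ → ℂ × ℂ) (p : ℤ × ℤ) : ℂ × ℂ :=
  (∑ ν : Fin 3,
      ((1 + δ * t1 * f ν (δ * (cellpt p.1 p.2).1, δ * (cellpt p.1 p.2).2) : ℝ) : ℂ)
        * (ψ (p.1 + moff ν, p.2 + noff ν)).2,
   ∑ ν : Fin 3,
      ((1 + δ * t1 *
          f ν (δ * (cellpt (p.1 - moff ν) (p.2 - noff ν)).1,
               δ * (cellpt (p.1 - moff ν) (p.2 - noff ν)).2) : ℝ) : ℂ)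
        * (ψ (p.1 - moff ν, p.2 - noff ν)).1)

/-! Since `w_ν = 𝒞_{m_ν,n_ν}` and `𝒞` is additive, the ansatz at the neighbour `(m ± m_ν, n ± n_ν)`
is `e^{ik·𝒞_{m,n}} e^{±ik·w_ν} Φ(δ𝒞_{m,n} ± δw_ν)`. Factoring out the common phase `e^{ik·𝒞_{m,n}}`
turns each component of `H^δψ` into the left-hand side of the corresponding continuum relation. -/

theorem cellpt_add (m n a b : ℤ) : cellpt (m + a) (n + b) = cellpt m n + cellpt a b := by
  simp only [cellpt, Int.cast_add, Prod.mk_add_mk]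
  congr 1 <;> ring

theorem cellpt_sub (m n a b : ℤ) : cellpt (m - a) (n - b) = cellpt m n - cellpt a b := by
  simp only [cellpt, Int.cast_sub, Prod.mk_sub_mk]
  congr 1 <;> ring

theorem cellpt_moff_noff (ν : Fin 3) : cellpt (moff ν) (noff ν) = ww ν := by
  fin_cases ν <;> norm_num [cellpt, moff, noff, ww]

theorem exp_I_dot_add (k x y : ℝ × ℝ) :
    Complex.exp (I * ((k.1 * (x + y).1 + k.2 * (x + y).2 : ℝ) : ℂ)) =
      Complex.exp (I * ((k.1 * x.1 + k.2 * x.2 : ℝ) : ℂ)) *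
        Complex.exp (I * ((k.1 * y.1 + k.2 * y.2 : ℝ) : ℂ)) := by
  rw [← Complex.exp_add]
  push_cast [Prod.fst_add, Prod.snd_add]
  ring_nf

theorem exp_I_dot_sub (k x y : ℝ × ℝ) :
    Complex.exp (I * ((k.1 * (x - y).1 + k.2 * (x - y).2 : ℝ) : ℂ)) =
      Complex.exp (I * ((k.1 * x.1 + k.2 * x.2 : ℝ) : ℂ)) *
        Complex.exp (-I * ((k.1 * y.1 + k.2 * y.2 : ℝ) : ℂ)) := by
  rw [← Complex.exp_add]
  push_cast [Prod.fst_sub, Prod.snd_sub]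
  ring_nf

def blochAnsatz (k : ℝ × ℝ) (δ : ℝ) (ΦA ΦB : ℝ × ℝ → ℂ) (p : ℤ × ℤ) : ℂ × ℂ :=
  Complex.exp (I * ((k.1 * (cellpt p.1 p.2).1 + k.2 * (cellpt p.1 p.2).2 : ℝ) : ℂ)) •
    (ΦA (δ * (cellpt p.1 p.2).1, δ * (cellpt p.1 p.2).2),
      ΦB (δ * (cellpt p.1 p.2).1, δ * (cellpt p.1 p.2).2))

section Hdelta

variable (f : Fin 3 → ℝ × ℝ → ℝ) (δ t1 : ℝ) (k : ℝ × ℝ) (ΦA ΦB : ℝ × ℝ → ℂ) (m n : ℤ)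

theorem Hdelta_blochAnsatz_fst :
    (Hdelta f δ t1 (blochAnsatz k δ ΦA ΦB) (m, n)).1 =
      Complex.exp (I * ((k.1 * (cellpt m n).1 + k.2 * (cellpt m n).2 : ℝ) : ℂ)) *
        ∑ ν : Fin 3,
          Complex.exp (I * ((k.1 * (ww ν).1 + k.2 * (ww ν).2 : ℝ) : ℂ)) *
            ((1 + δ * t1 * f ν (δ * (cellpt m n).1, δ * (cellpt m n).2) : ℝ) : ℂ) *
            ΦB (δ * (cellpt m n).1 + δ * (ww ν).1, δ * (cellpt m n).2 + δ * (ww ν).2) := by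
  simp only [Hdelta, blochAnsatz, cellpt_add, cellpt_moff_noff, exp_I_dot_add]
  simp only [Prod.smul_snd, smul_eq_mul, Prod.fst_add, Prod.snd_add, mul_add, Finset.mul_sum]
  refine Finset.sum_congr rfl fun ν _ => ?_
  ring

theorem Hdelta_blochAnsatz_snd :
    (Hdelta f δ t1 (blochAnsatz k δ ΦA ΦB) (m, n)).2 =
      Complex.exp (I * ((k.1 * (cellpt m n).1 + k.2 * (cellpt m n).2 : ℝ) : ℂ)) *
        ∑ ν : Fin 3,
          Complex.exp (-I * ((k.1 * (ww ν).1 + k.2 * (ww ν).2 : ℝ) : ℂ)) *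
            ((1 + δ * t1 * f ν (δ * (cellpt m n).1 - δ * (ww ν).1,
                δ * (cellpt m n).2 - δ * (ww ν).2) : ℝ) : ℂ) *
            ΦA (δ * (cellpt m n).1 - δ * (ww ν).1, δ * (cellpt m n).2 - δ * (ww ν).2) := by
  simp only [Hdelta, blochAnsatz, cellpt_sub, cellpt_moff_noff, exp_I_dot_sub]
  simp only [Prod.smul_fst, smul_eq_mul, Prod.fst_sub, Prod.snd_sub, mul_sub, Finset.mul_sum]
  refine Finset.sum_congr rfl fun ν _ => ?_
  ring

end Hdelta

theorem twoscale_ansatz_solves_discrete_eigenproblem_general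
    (f : Fin 3 → ℝ × ℝ → ℝ) (δ : ℝ) (t1 : ℝ) (k : ℝ × ℝ) (E : ℂ)
    (ΦA ΦB : ℝ × ℝ → ℂ)
    (hA : ∀ m n : ℤ,
      (∑ ν : Fin 3,
          Complex.exp (I * ((k.1 * (ww ν).1 + k.2 * (ww ν).2 : ℝ) : ℂ)) *
            ((1 + δ * t1 * f ν (δ * (cellpt m n).1, δ * (cellpt m n).2) : ℝ) : ℂ) *
            ΦB (δ * (cellpt m n).1 + δ * (ww ν).1, δ * (cellpt m n).2 + δ * (ww ν).2))
        = E * ΦA (δ * (cellpt m n).1, δ * (cellpt m n).2))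
    (hB : ∀ m n : ℤ,
      (∑ ν : Fin 3,
          Complex.exp (-I * ((k.1 * (ww ν).1 + k.2 * (ww ν).2 : ℝ) : ℂ)) *
            ((1 + δ * t1 * f ν (δ * (cellpt m n).1 - δ * (ww ν).1,
                δ * (cellpt m n).2 - δ * (ww ν).2) : ℝ) : ℂ) *
            ΦA (δ * (cellpt m n).1 - δ * (ww ν).1, δ * (cellpt m n).2 - δ * (ww ν).2))
        = E * ΦB (δ * (cellpt m n).1, δ * (cellpt m n).2)) :
    ∀ m n : ℤ,
      Hdelta f δ t1
        (fun p => Complex.exp (I * ((k.1 * (cellpt p.1 p.2).1 + k.2 * (cellpt p.1 p.2).2 : ℝ) : ℂ)) •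
          ((ΦA (δ * (cellpt p.1 p.2).1, δ * (cellpt p.1 p.2).2),
            ΦB (δ * (cellpt p.1 p.2).1, δ * (cellpt p.1 p.2).2)) : ℂ × ℂ)) (m, n)
      = E • (Complex.exp (I * ((k.1 * (cellpt m n).1 + k.2 * (cellpt m n).2 : ℝ) : ℂ)) •
          ((ΦA (δ * (cellpt m n).1, δ * (cellpt m n).2),
            ΦB (δ * (cellpt m n).1, δ * (cellpt m n).2)) : ℂ × ℂ)) := by
  intro m n
  change Hdelta f δ t1 (blochAnsatz k δ ΦA ΦB) (m, n) = E • blochAnsatz k δ ΦA ΦB (m, n)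
  ext
  · rw [Hdelta_blochAnsatz_fst, hA]
    simp only [blochAnsatz, Prod.smul_fst, smul_eq_mul]
    ring
  · rw [Hdelta_blochAnsatz_snd, hB]
    simp only [blochAnsatz, Prod.smul_snd, smul_eq_mul]
    ring

/-- If `Φ = (Φ^A, Φ^B)` solves the two-scale continuum system at every lattice
point `X = δ𝒞_{m,n}`, then `ψ_{m,n} = e^{ik·𝒞_{m,n}} Φ(δ𝒞_{m,n})` solves the discrete eigenvalue
problem `H^δψ = Eψ`. -/
theorem twoscale_ansatz_solves_discrete_eigenproblem
    (f : Fin 3 → ℝ × ℝ → ℝ) (δ : ℝ) (hδ : 0 < δ) (t1 : ℝ) (k : ℝ × ℝ) (E : ℂ)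
    (ΦA ΦB : ℝ × ℝ → ℂ)
    (hA : ∀ m n : ℤ,
      (∑ ν : Fin 3,
          Complex.exp (I * ((k.1 * (ww ν).1 + k.2 * (ww ν).2 : ℝ) : ℂ)) *
            ((1 + δ * t1 * f ν (δ * (cellpt m n).1, δ * (cellpt m n).2) : ℝ) : ℂ) *
            ΦB (δ * (cellpt m n).1 + δ * (ww ν).1, δ * (cellpt m n).2 + δ * (ww ν).2))
        = E * ΦA (δ * (cellpt m n).1, δ * (cellpt m n).2))
    (hB : ∀ m n : ℤ,
      (∑ ν : Fin 3,
          Complex.exp (-I * ((k.1 * (ww ν).1 + k.2 * (ww ν).2 : ℝ) : ℂ)) *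
            ((1 + δ * t1 * f ν (δ * (cellpt m n).1 - δ * (ww ν).1,
                δ * (cellpt m n).2 - δ * (ww ν).2) : ℝ) : ℂ) *
            ΦA (δ * (cellpt m n).1 - δ * (ww ν).1, δ * (cellpt m n).2 - δ * (ww ν).2))
        = E * ΦB (δ * (cellpt m n).1, δ * (cellpt m n).2)) :
    ∀ m n : ℤ,
      Hdelta f δ t1
        (fun p => Complex.exp (I * ((k.1 * (cellpt p.1 p.2).1 + k.2 * (cellpt p.1 p.2).2 : ℝ) : ℂ)) •
          ((ΦA (δ * (cellpt p.1 p.2).1, δ * (cellpt p.1 p.2).2),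
            ΦB (δ * (cellpt p.1 p.2).1, δ * (cellpt p.1 p.2).2)) : ℂ × ℂ)) (m, n)
      = E • (Complex.exp (I * ((k.1 * (cellpt m n).1 + k.2 * (cellpt m n).2 : ℝ) : ℂ)) •
          ((ΦA (δ * (cellpt m n).1, δ * (cellpt m n).2),
            ΦB (δ * (cellpt m n).1, δ * (cellpt m n).2)) : ℂ × ℂ)) :=
  twoscale_ansatz_solves_discrete_eigenproblem_general f δ t1 k E ΦA ΦB hA hB
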